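/- arXiv:1009.2975 — 4 statements merged into one kernel-verified Lean document; each statement's English description precedes it below -/
import Mathlib

section
/- Let (M,ω) be a 2-plectic manifold (ω a closed nondegenerate 3-form). If α and β are Hamiltonian 1-forms with Hamiltonian vector fields v_α, v_β, then the bracket {α,β} := ι_{v_β} ι_{v_α} ω is again Hamiltonian, with Hamiltonian vector field [v_α, v_β]; i.e., d{α,β} = -ι_{[v_α,v_β]} ω. -/
/-!
Cartan's formula gives `ι_{[v,w]} ω = L_v ι_w ω - ι_w L_v ω`. When `ω` is closed and `ι_v ω`,
`ι_w ω` are closed (here even exact, `ι_{v_α} ω = -dα`), both Lie derivatives reduce to their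
`d ι` parts, leaving `ι_{[v,w]} ω = d ι_v ι_w ω`; skew-symmetry turns the right side into
`-d ι_w ι_v ω`.
-/

noncomputable section

/-- An abstract Cartan calculus on a manifold: vector fields `X`, smooth functions `Ω0`,
differential forms `Ω1`–`Ω4`, points `Pt`, with exterior derivative, interior products,
evaluation at points, and the standard identities of the Cartan calculus. -/
structure CartanCalculus (X Ω0 Ω1 Ω2 Ω3 Ω4 Pt : Type*)
    [LieRing X] [LieAlgebra ℝ X]
    [CommRing Ω0] [Algebra ℝ Ω0] [Module Ω0 X]
    [AddCommGroup Ω1] [Module ℝ Ω1] [Module Ω0 Ω1]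
    [AddCommGroup Ω2] [Module ℝ Ω2]
    [AddCommGroup Ω3] [Module ℝ Ω3]
    [AddCommGroup Ω4] [Module ℝ Ω4] where
  /-- exterior derivative on functions -/
  d0 : Ω0 →ₗ[ℝ] Ω1
  d1 : Ω1 →ₗ[ℝ] Ω2
  d2 : Ω2 →ₗ[ℝ] Ω3
  d3 : Ω3 →ₗ[ℝ] Ω4
  /-- interior product of a vector field with a 1-form -/
  i1 : X → Ω1 →ₗ[ℝ] Ω0
  i2 : X → Ω2 →ₗ[ℝ] Ω1
  i3 : X → Ω3 →ₗ[ℝ] Ω2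
  i4 : X → Ω4 →ₗ[ℝ] Ω3
  /-- evaluation of a function at a point -/
  ev : Pt → Ω0 →ₗ[ℝ] ℝ
  d1_d0 : ∀ f, d1 (d0 f) = 0
  d2_d1 : ∀ α, d2 (d1 α) = 0
  d3_d2 : ∀ B, d3 (d2 B) = 0
  i_skew2 : ∀ v w B, i1 v (i2 w B) = - i1 w (i2 v B)
  i_skew3 : ∀ v w σ, i2 v (i3 w σ) = - i2 w (i3 v σ)
  i_skew4 : ∀ v w σ, i3 v (i4 w σ) = - i3 w (i4 v σ)
  /-- `ι_{[v,w]} = L_v ι_w - ι_w L_v` on 1-forms, with `L` given by Cartan's formula -/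
  ibr1 : ∀ v w α, i1 ⁅v, w⁆ α =
    i1 v (d0 (i1 w α)) - i1 w (i2 v (d1 α) + d0 (i1 v α))
  ibr2 : ∀ v w B, i2 ⁅v, w⁆ B =
    (i2 v (d1 (i2 w B)) + d0 (i1 v (i2 w B))) - i2 w (i3 v (d2 B) + d1 (i2 v B))
  ibr3 : ∀ v w σ, i3 ⁅v, w⁆ σ =
    (i3 v (d2 (i3 w σ)) + d1 (i2 v (i3 w σ))) - i3 w (i4 v (d3 σ) + d2 (i3 v σ))
  /-- a 1-form vanishing on all vector fields is zero -/
  i1_ext : ∀ α : Ω1, (∀ v, i1 v α = 0) → α = 0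
  i2_ext : ∀ B : Ω2, (∀ v, i2 v B = 0) → B = 0
  d0_mul : ∀ f g, d0 (f * g) = f • d0 g + g • d0 f
  i1_smul : ∀ (v : X) (f : Ω0) (α : Ω1), i1 v (f • α) = f * i1 v α
  i1_smulX : ∀ (f : Ω0) (v : X) (α : Ω1), i1 (f • v) α = f * i1 v α
  i2_smulX : ∀ (f : Ω0) (v : X) (B : Ω2), i2 (f • v) B = f • i2 v B
  lie_smul' : ∀ (v : X) (f : Ω0) (w : X), ⁅v, f • w⁆ = f • ⁅v, w⁆ + (i1 v (d0 f)) • w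
  d0_algebraMap : ∀ r : ℝ, d0 (algebraMap ℝ Ω0 r) = 0
  ev_algebraMap : ∀ (x : Pt) (r : ℝ), ev x (algebraMap ℝ Ω0 r) = r

namespace CartanCalculus

variable {X Ω0 Ω1 Ω2 Ω3 Ω4 Pt : Type*}
    [LieRing X] [LieAlgebra ℝ X]
    [CommRing Ω0] [Algebra ℝ Ω0] [Module Ω0 X]
    [AddCommGroup Ω1] [Module ℝ Ω1] [Module Ω0 Ω1]
    [AddCommGroup Ω2] [Module ℝ Ω2]
    [AddCommGroup Ω3] [Module ℝ Ω3]
    [AddCommGroup Ω4] [Module ℝ Ω4]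
    (C : CartanCalculus X Ω0 Ω1 Ω2 Ω3 Ω4 Pt)

/-- Lie derivative of a function: `L_v f = ι_v df`. -/
def lie0 (v : X) (f : Ω0) : Ω0 := C.i1 v (C.d0 f)

/-- Lie derivative of a 1-form via Cartan's formula: `L_v α = ι_v dα + d ι_v α`. -/
def lie1 (v : X) (α : Ω1) : Ω1 := C.i2 v (C.d1 α) + C.d0 (C.i1 v α)

/-- `α` is a Hamiltonian 1-form with Hamiltonian vector field `v`: `dα = -ι_v ω`. -/
def IsHam (ω : Ω3) (α : Ω1) (v : X) : Prop := C.d1 α = - C.i3 v ω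

/-- `v` is a Hamiltonian vector field. -/
def IsHamVF (ω : Ω3) (v : X) : Prop := ∃ α : Ω1, C.IsHam ω α v

/-- The bracket of Hamiltonian 1-forms, `{α, β} = ι_{v_β} ι_{v_α} ω`, expressed through
the Hamiltonian vector fields `v = v_α`, `w = v_β`. -/
def brkt (ω : Ω3) (v w : X) : Ω1 := C.i2 w (C.i3 v ω)

/-- `ι_u ι_v ι_w ω`. -/
def triple (ω : Ω3) (u v w : X) : Ω0 := C.i1 u (C.i2 v (C.i3 w ω))

/-- The standard symmetric pairing on sections of `TM ⊕ T*M`. -/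
def pairP (e1 e2 : X × Ω1) : Ω0 := C.i1 e1.1 e2.2 + C.i1 e2.1 e1.2

/-- The standard Courant bracket on sections of `TM ⊕ T*M`. -/
def cb (e1 e2 : X × Ω1) : X × Ω1 :=
  (⁅e1.1, e2.1⁆,
    C.lie1 e1.1 e2.2 - C.lie1 e2.1 e1.2
      - (1/2 : ℝ) • C.d0 (C.i1 e1.1 e2.2 - C.i1 e2.1 e1.2))

/-- The standard Dorfman bracket on sections of `TM ⊕ T*M`. -/
def db (e1 e2 : X × Ω1) : X × Ω1 :=
  (⁅e1.1, e2.1⁆, C.lie1 e1.1 e2.2 - C.i2 e2.1 (C.d1 e1.2))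

/-- The `ω`-twisted Courant bracket. -/
def tcb (ω : Ω3) (e1 e2 : X × Ω1) : X × Ω1 :=
  C.cb e1 e2 - ((0 : X), C.i2 e2.1 (C.i3 e1.1 ω))

/-- The `ω`-twisted Dorfman bracket. -/
def tdb (ω : Ω3) (e1 e2 : X × Ω1) : X × Ω1 :=
  C.db e1 e2 - ((0 : X), C.i2 e2.1 (C.i3 e1.1 ω))

/-- The homotopy `Φ(α,β) = -½(ι_{v_α}β - ι_{v_β}α)`. -/
def Phi (v : X) (α : Ω1) (w : X) (β : Ω1) : Ω0 :=
  -((1/2 : ℝ) • (C.i1 v β - C.i1 w α))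

/-- The Jacobiator of the Courant Lie 2-algebra. -/
def Jprime (ω : Ω3) (e1 e2 e3 : X × Ω1) : Ω0 :=
  -((1/6 : ℝ) • (C.pairP (C.tcb ω e1 e2) e3 + C.pairP (C.tcb ω e3 e1) e2
      + C.pairP (C.tcb ω e2 e3) e1))

/-- The degree-1 bracket `[e,f] = ½⟨e, df⟩₊` of the Courant Lie 2-algebra. -/
def brD1 (e : X × Ω1) (f : Ω0) : Ω0 :=
  (1/2 : ℝ) • C.pairP e ((0 : X), C.d0 f)

/-- The Lie algebroid bracket on `TM ⊕ ℝ` twisted by a 2-form `ω₂` (via the splitting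
`s(v) = (v,0)`): `[(v₁,f₁),(v₂,f₂)] = ([v₁,v₂], v₁(f₂) - v₂(f₁) - ω₂(v₁,v₂))`. -/
def abr (ω2 : Ω2) (e1 e2 : X × Ω0) : X × Ω0 :=
  (⁅e1.1, e2.1⁆,
    C.i1 e1.1 (C.d0 e2.2) - C.i1 e2.1 (C.d0 e1.2) - C.i1 e2.1 (C.i2 e1.1 ω2))

end CartanCalculus

open CartanCalculus

variable {X Ω0 Ω1 Ω2 Ω3 Ω4 Pt : Type*}
    [LieRing X] [LieAlgebra ℝ X]
    [CommRing Ω0] [Algebra ℝ Ω0] [Module Ω0 X]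
    [AddCommGroup Ω1] [Module ℝ Ω1] [Module Ω0 Ω1]
    [AddCommGroup Ω2] [Module ℝ Ω2]
    [AddCommGroup Ω3] [Module ℝ Ω3]
    [AddCommGroup Ω4] [Module ℝ Ω4]

namespace CartanCalculus

variable {C : CartanCalculus X Ω0 Ω1 Ω2 Ω3 Ω4 Pt}

theorem IsHam.d2_i3_eq_zero {ω : Ω3} {α : Ω1} {v : X} (h : C.IsHam ω α v) :
    C.d2 (C.i3 v ω) = 0 := by
  rw [neg_eq_iff_eq_neg.mp h.symm, map_neg, C.d2_d1, neg_zero]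

theorem i3_lie_eq_d1_i2_i3 {σ : Ω3} {v w : X} (hσ : C.d3 σ = 0)
    (hv : C.d2 (C.i3 v σ) = 0) (hw : C.d2 (C.i3 w σ) = 0) :
    C.i3 ⁅v, w⁆ σ = C.d1 (C.i2 v (C.i3 w σ)) := by
  rw [C.ibr3, hσ, hv, hw]
  simp

end CartanCalculus

theorem bracket_isHamiltonian_general
    (C : CartanCalculus X Ω0 Ω1 Ω2 Ω3 Ω4 Pt) (ω : Ω3)
    (hcl : C.d3 ω = 0)
    (α β : Ω1) (vα vβ : X)
    (hα : C.IsHam ω α vα) (hβ : C.IsHam ω β vβ) :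
    C.d1 (C.brkt ω vα vβ) = - C.i3 ⁅vα, vβ⁆ ω := by
  calc C.d1 (C.brkt ω vα vβ) = - C.d1 (C.i2 vα (C.i3 vβ ω)) := by
        rw [brkt, C.i_skew3, map_neg]
    _ = - C.i3 ⁅vα, vβ⁆ ω := by
        rw [i3_lie_eq_d1_i2_i3 hcl hα.d2_i3_eq_zero hβ.d2_i3_eq_zero]

/-- On a 2-plectic manifold, the bracket of Hamiltonian 1-forms is Hamiltonian,
with Hamiltonian vector field the Lie bracket of the Hamiltonian vector fields. -/
theorem bracket_isHamiltonian
    (C : CartanCalculus X Ω0 Ω1 Ω2 Ω3 Ω4 Pt) (ω : Ω3)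
    (hcl : C.d3 ω = 0) (hnd : ∀ v : X, C.i3 v ω = 0 → v = 0)
    (α β : Ω1) (vα vβ : X)
    (hα : C.IsHam ω α vα) (hβ : C.IsHam ω β vβ) :
    C.d1 (C.brkt ω vα vβ) = - C.i3 ⁅vα, vβ⁆ ω :=
  bracket_isHamiltonian_general C ω hcl α β vα vβ hα hβ

end
end

section
/- On a 2-plectic manifold (M,ω), the bracket {α,β} = ι_{v_β} ι_{v_α} ω on Hamiltonian 1-forms satisfies the Jacobi identity up to an exact term: {α,{β,γ}} - {{α,β},γ} - {β,{α,γ}} = d(ι_{v_α} ι_{v_β} ι_{v_γ} ω). -/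
/-! Closedness of `ω` makes every `ι_{v_α} ω = -dα` closed, so Cartan's formula for
`ι_{[v,w]}` on `ω` shows that `{α, β}` is again Hamiltonian, with vector field `[v_α, v_β]`.
Applying Cartan's formula once more to the closed 2-form `ι_{v_α} ω` expands
`{α, {β, γ}} = ι_{[v_β, v_γ]} ι_{v_α} ω` into `{{α, β}, γ} + {β, {α, γ}}` plus the exact
term `d ι_{v_β} ι_{v_γ} ι_{v_α} ω = d ι_{v_α} ι_{v_β} ι_{v_γ} ω`. -/

noncomputable section

namespace CartanCalculus

variable {X Ω0 Ω1 Ω2 Ω3 Ω4 Pt : Type*}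
    [LieRing X] [LieAlgebra ℝ X]
    [CommRing Ω0] [Algebra ℝ Ω0] [Module Ω0 X]
    [AddCommGroup Ω1] [Module ℝ Ω1] [Module Ω0 Ω1]
    [AddCommGroup Ω2] [Module ℝ Ω2]
    [AddCommGroup Ω3] [Module ℝ Ω3]
    [AddCommGroup Ω4] [Module ℝ Ω4]
    (C : CartanCalculus X Ω0 Ω1 Ω2 Ω3 Ω4 Pt) {ω : Ω3}

theorem brkt_comm (v w : X) : C.brkt ω v w = -C.brkt ω w v :=
  C.i_skew3 w v ω

theorem triple_cycle (u v w : X) : C.triple ω u v w = C.triple ω v w u := by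
  rw [triple, triple, C.i_skew3 w u ω, map_neg, C.i_skew2 v u, neg_neg]

theorem d2_i3_eq_zero_of_isHam {α : Ω1} {v : X} (h : C.IsHam ω α v) :
    C.d2 (C.i3 v ω) = 0 := by
  rw [← neg_neg (C.i3 v ω), ← show C.d1 α = -C.i3 v ω from h, map_neg, C.d2_d1, neg_zero]

/-- Cartan's formula `ι_{[v,w]} = [L_v, ι_w]`, applied to the closed 2-form `ι_u ω`. -/
theorem brkt_lie_right {u : X} (hu : C.d2 (C.i3 u ω) = 0) (v w : X) :
    C.brkt ω u ⁅v, w⁆ = C.i2 v (C.d1 (C.brkt ω u w)) + C.d0 (C.i1 v (C.brkt ω u w))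
      - C.i2 w (C.d1 (C.brkt ω u v)) := by
  rw [brkt, C.ibr2, hu, map_zero, zero_add, brkt, brkt]

theorem isHam_brkt (hcl : C.d3 ω = 0) {α β : Ω1} {v w : X}
    (hα : C.IsHam ω α v) (hβ : C.IsHam ω β w) : C.IsHam ω (C.brkt ω v w) ⁅v, w⁆ := by
  have h := C.ibr3 v w ω
  rw [hcl, C.d2_i3_eq_zero_of_isHam hα, C.d2_i3_eq_zero_of_isHam hβ] at h
  simp only [map_zero, add_zero, zero_add, sub_zero] at h
  rw [IsHam, h, brkt_comm, map_neg, brkt]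

end CartanCalculus

open CartanCalculus

variable {X Ω0 Ω1 Ω2 Ω3 Ω4 Pt : Type*}
    [LieRing X] [LieAlgebra ℝ X]
    [CommRing Ω0] [Algebra ℝ Ω0] [Module Ω0 X]
    [AddCommGroup Ω1] [Module ℝ Ω1] [Module Ω0 Ω1]
    [AddCommGroup Ω2] [Module ℝ Ω2]
    [AddCommGroup Ω3] [Module ℝ Ω3]
    [AddCommGroup Ω4] [Module ℝ Ω4]

theorem jacobi_up_to_exact_general
    (C : CartanCalculus X Ω0 Ω1 Ω2 Ω3 Ω4 Pt) (ω : Ω3)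
    (hcl : C.d3 ω = 0)
    (α β γ : Ω1) (vα vβ vγ : X)
    (hα : C.IsHam ω α vα) (hβ : C.IsHam ω β vβ) (hγ : C.IsHam ω γ vγ) :
    C.brkt ω vα ⁅vβ, vγ⁆ - C.brkt ω ⁅vα, vβ⁆ vγ - C.brkt ω vβ ⁅vα, vγ⁆
      = C.d0 (C.triple ω vα vβ vγ) := by
  have hαβ : C.d1 (C.brkt ω vα vβ) = -C.i3 ⁅vα, vβ⁆ ω := C.isHam_brkt hcl hα hβ
  have hαγ : C.d1 (C.brkt ω vα vγ) = -C.i3 ⁅vα, vγ⁆ ω := C.isHam_brkt hcl hα hγ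
  have hβγα : C.i1 vβ (C.brkt ω vα vγ) = C.triple ω vα vβ vγ := by
    rw [C.triple_cycle]; rfl
  rw [C.brkt_lie_right (C.d2_i3_eq_zero_of_isHam hα), hαβ, hαγ, hβγα, map_neg, map_neg,
    ← brkt, ← brkt, C.brkt_comm ⁅vα, vγ⁆ vβ]
  abel

/-- The bracket of Hamiltonian 1-forms satisfies the Jacobi identity up to an exact term. -/
theorem jacobi_up_to_exact
    (C : CartanCalculus X Ω0 Ω1 Ω2 Ω3 Ω4 Pt) (ω : Ω3)
    (hcl : C.d3 ω = 0) (hnd : ∀ v : X, C.i3 v ω = 0 → v = 0)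
    (α β γ : Ω1) (vα vβ vγ : X)
    (hα : C.IsHam ω α vα) (hβ : C.IsHam ω β vβ) (hγ : C.IsHam ω γ vγ) :
    C.brkt ω vα ⁅vβ, vγ⁆ - C.brkt ω ⁅vα, vβ⁆ vγ - C.brkt ω vβ ⁅vα, vγ⁆
      = C.d0 (C.triple ω vα vβ vγ) :=
  jacobi_up_to_exact_general C ω hcl α β γ vα vβ vγ hα hβ hγ
end
end

section
/- On a 2-plectic manifold (M,ω), for Hamiltonian 1-forms α, β with Hamiltonian vector fields v_α, v_β, one has L_{v_α} β - L_{v_β} α = 2{α,β} + d(ι_{v_α} β - ι_{v_β} α). -/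
noncomputable section

namespace CartanCalculus

variable {X Ω0 Ω1 Ω2 Ω3 Ω4 Pt : Type*}
    [LieRing X] [LieAlgebra ℝ X]
    [CommRing Ω0] [Algebra ℝ Ω0] [Module Ω0 X]
    [AddCommGroup Ω1] [Module ℝ Ω1] [Module Ω0 Ω1]
    [AddCommGroup Ω2] [Module ℝ Ω2]
    [AddCommGroup Ω3] [Module ℝ Ω3]
    [AddCommGroup Ω4] [Module ℝ Ω4]
    (C : CartanCalculus X Ω0 Ω1 Ω2 Ω3 Ω4 Pt)

theorem brkt_swap (ω : Ω3) (v w : X) : C.brkt ω w v = - C.brkt ω v w :=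
  C.i_skew3 v w ω

theorem lie1_eq_brkt_add_d0 {ω : Ω3} {β : Ω1} {w : X} (hβ : C.IsHam ω β w) (v : X) :
    C.lie1 v β = C.brkt ω v w + C.d0 (C.i1 v β) := by
  rw [lie1, hβ, map_neg, C.i_skew3, neg_neg, brkt]

end CartanCalculus

open CartanCalculus

variable {X Ω0 Ω1 Ω2 Ω3 Ω4 Pt : Type*}
    [LieRing X] [LieAlgebra ℝ X]
    [CommRing Ω0] [Algebra ℝ Ω0] [Module Ω0 X]
    [AddCommGroup Ω1] [Module ℝ Ω1] [Module Ω0 Ω1]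
    [AddCommGroup Ω2] [Module ℝ Ω2]
    [AddCommGroup Ω3] [Module ℝ Ω3]
    [AddCommGroup Ω4] [Module ℝ Ω4]

theorem lieDeriv_antisym_general
    (C : CartanCalculus X Ω0 Ω1 Ω2 Ω3 Ω4 Pt) (ω : Ω3)
    (α β : Ω1) (vα vβ : X)
    (hα : C.IsHam ω α vα) (hβ : C.IsHam ω β vβ) :
    C.lie1 vα β - C.lie1 vβ α
      = (2 : ℝ) • C.brkt ω vα vβ + C.d0 (C.i1 vα β - C.i1 vβ α) := by
  rw [C.lie1_eq_brkt_add_d0 hβ, C.lie1_eq_brkt_add_d0 hα, C.brkt_swap, map_sub]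
  module

/-- `L_{v_α} β - L_{v_β} α = 2{α,β} + d(ι_{v_α}β - ι_{v_β}α)`. -/
theorem lieDeriv_antisym
    (C : CartanCalculus X Ω0 Ω1 Ω2 Ω3 Ω4 Pt) (ω : Ω3)
    (hcl : C.d3 ω = 0) (hnd : ∀ v : X, C.i3 v ω = 0 → v = 0)
    (α β : Ω1) (vα vβ : X)
    (hα : C.IsHam ω α vα) (hβ : C.IsHam ω β vβ) :
    C.lie1 vα β - C.lie1 vβ α
      = (2 : ℝ) • C.brkt ω vα vβ + C.d0 (C.i1 vα β - C.i1 vβ α) :=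
  lieDeriv_antisym_general C ω α β vα vβ hα hβ

end
end

section
/- On a 2-plectic manifold (M,ω), for Hamiltonian 1-forms α, β, γ with Hamiltonian vector fields v_α, v_β, v_γ: ι_{[v_α,v_β]} γ + ι_{[v_β,v_γ]} α + ι_{[v_γ,v_α]} β = -3 ι_{v_α} ι_{v_β} ι_{v_γ} ω + ι_{v_α} d(ι_{v_β}γ - ι_{v_γ}β) + ι_{v_γ} d(ι_{v_α}β - ι_{v_β}α) + ι_{v_β} d(ι_{v_γ}α - ι_{v_α}γ). -/
noncomputable section

namespace CartanCalculus

variable {X Ω0 Ω1 Ω2 Ω3 Ω4 Pt : Type*}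
    [LieRing X] [LieAlgebra ℝ X]
    [CommRing Ω0] [Algebra ℝ Ω0] [Module Ω0 X]
    [AddCommGroup Ω1] [Module ℝ Ω1] [Module Ω0 Ω1]
    [AddCommGroup Ω2] [Module ℝ Ω2]
    [AddCommGroup Ω3] [Module ℝ Ω3]
    [AddCommGroup Ω4] [Module ℝ Ω4]
    (C : CartanCalculus X Ω0 Ω1 Ω2 Ω3 Ω4 Pt)

variable {C}

theorem triple_swap_left (ω : Ω3) (u v w : X) : C.triple ω u v w = - C.triple ω v u w :=
  C.i_skew2 u v (C.i3 w ω)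

theorem triple_swap_right (ω : Ω3) (u v w : X) : C.triple ω u v w = - C.triple ω u w v := by
  rw [triple, triple, C.i_skew3, map_neg]

theorem i1_lie_of_isHam {ω : Ω3} {γ : Ω1} {u : X} (h : C.IsHam ω γ u) (v w : X) :
    C.i1 ⁅v, w⁆ γ
      = C.i1 v (C.d0 (C.i1 w γ)) - C.i1 w (C.d0 (C.i1 v γ)) + C.triple ω w v u := by
  rw [IsHam] at h
  rw [C.ibr1, h, triple, map_neg, map_add, map_neg]
  abel

end CartanCalculus

open CartanCalculus

variable {X Ω0 Ω1 Ω2 Ω3 Ω4 Pt : Type*}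
    [LieRing X] [LieAlgebra ℝ X]
    [CommRing Ω0] [Algebra ℝ Ω0] [Module Ω0 X]
    [AddCommGroup Ω1] [Module ℝ Ω1] [Module Ω0 Ω1]
    [AddCommGroup Ω2] [Module ℝ Ω2]
    [AddCommGroup Ω3] [Module ℝ Ω3]
    [AddCommGroup Ω4] [Module ℝ Ω4]

theorem cyclic_contraction_general
    (C : CartanCalculus X Ω0 Ω1 Ω2 Ω3 Ω4 Pt) (ω : Ω3)
    (α β γ : Ω1) (vα vβ vγ : X)
    (hα : C.IsHam ω α vα) (hβ : C.IsHam ω β vβ) (hγ : C.IsHam ω γ vγ) :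
    C.i1 ⁅vα, vβ⁆ γ + C.i1 ⁅vβ, vγ⁆ α + C.i1 ⁅vγ, vα⁆ β
      = (-3 : ℝ) • C.triple ω vα vβ vγ
        + C.i1 vα (C.d0 (C.i1 vβ γ - C.i1 vγ β))
        + C.i1 vγ (C.d0 (C.i1 vα β - C.i1 vβ α))
        + C.i1 vβ (C.d0 (C.i1 vγ α - C.i1 vα γ)) := by
  have hαβ : C.triple ω vβ vα vγ = - C.triple ω vα vβ vγ := triple_swap_left ω vβ vα vγ
  have hβγ : C.triple ω vγ vβ vα = - C.triple ω vα vβ vγ := by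
    rw [triple_swap_left ω vγ, triple_swap_right ω vβ, triple_swap_left ω vβ, neg_neg]
  have hγα : C.triple ω vα vγ vβ = - C.triple ω vα vβ vγ := triple_swap_right ω vα vγ vβ
  rw [i1_lie_of_isHam hγ, i1_lie_of_isHam hα, i1_lie_of_isHam hβ, hαβ, hβγ, hγα]
  simp only [map_sub]
  module

/-- Cyclic contraction identity for Hamiltonian 1-forms on a 2-plectic manifold. -/
theorem cyclic_contraction
    (C : CartanCalculus X Ω0 Ω1 Ω2 Ω3 Ω4 Pt) (ω : Ω3)
    (hcl : C.d3 ω = 0) (hnd : ∀ v : X, C.i3 v ω = 0 → v = 0)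
    (α β γ : Ω1) (vα vβ vγ : X)
    (hα : C.IsHam ω α vα) (hβ : C.IsHam ω β vβ) (hγ : C.IsHam ω γ vγ) :
    C.i1 ⁅vα, vβ⁆ γ + C.i1 ⁅vβ, vγ⁆ α + C.i1 ⁅vγ, vα⁆ β
      = (-3 : ℝ) • C.triple ω vα vβ vγ
        + C.i1 vα (C.d0 (C.i1 vβ γ - C.i1 vγ β))
        + C.i1 vγ (C.d0 (C.i1 vα β - C.i1 vβ α))
        + C.i1 vβ (C.d0 (C.i1 vγ α - C.i1 vα γ)) :=
  cyclic_contraction_general C ω α β γ vα vβ vγ hα hβ hγ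

end
end
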